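/- Let C be a reduced combinatorial code on n neurons and let i ∈ [n]. Define, for c ∈ C, g(c) = (c ∖ {i}) ∪ ⋃ { √[C]({i,j}) : j ∈ [n], {i,j} ⊆ c, tk_C({i,j}) ≠ tk_C({i}) } (this is f_i^⊤(f_i(c)) for the i-th covering map f_i). Then √[C]{i} is not in the image of g; that is, g(c) ≠ √[C]{i} for every c ∈ C. -/

import Mathlib

/-!
Every codeword containing `i` contains `√[C]{i}`, so `i ∈ √[C]{i}`. Since `c ∖ {i}` omits `i`, if
`g(c) = √[C]{i}` then `i` must come from some root `√[C]{i,j}` with `j ∈ c`, `j ≠ i` and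
`tk_C({i,j}) ≠ tk_C({i})`. But then `j ∈ c ∖ {i} ⊆ g(c) = √[C]{i}`, i.e. every codeword containing
`i` contains `j`, which says exactly that `tk_C({i,j}) = tk_C({i})`.
-/

/-- The trunk of `τ` in the code `C`: all codewords containing `τ`. -/
def trunk {n : ℕ} (C : Finset (Finset (Fin n))) (τ : Finset (Fin n)) :
    Finset (Finset (Fin n)) :=
  C.filter (fun σ => τ ⊆ σ)

/-- The root of a family of subsets: the intersection of all its members. -/
def root {n : ℕ} (S : Finset (Finset (Fin n))) : Finset (Fin n) :=
  S.inf id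

/-- The root of `τ` relative to `C`. -/
def rootRel {n : ℕ} (C : Finset (Finset (Fin n))) (τ : Finset (Fin n)) :
    Finset (Fin n) :=
  root (trunk C τ)

/-- A code is reduced if it has no trivial neurons (empty trunks) and no
redundant neurons. -/
def Reduced {n : ℕ} (C : Finset (Finset (Fin n))) : Prop :=
  (∀ i : Fin n, (trunk C {i}).Nonempty) ∧
    ∀ i : Fin n, ¬ ∃ σ : Finset (Fin n), i ∉ σ ∧ trunk C {i} = trunk C σ

/-- The composite `f_i^⊤ ∘ f_i` of the `i`-th covering map with its canonical
adjoint: `g(c) = (c ∖ {i}) ∪ ⋃ {√[C]({i,j}) : {i,j} ⊆ c, tk_C({i,j}) ≠ tk_C({i})}`. -/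
def coverRoundTrip {n : ℕ} (C : Finset (Finset (Fin n))) (i : Fin n)
    (c : Finset (Fin n)) : Finset (Fin n) :=
  c.erase i ∪
    (Finset.univ.filter (fun j : Fin n =>
        ({i, j} : Finset (Fin n)) ⊆ c ∧ trunk C {i, j} ≠ trunk C {i})).sup
      (fun j => rootRel C {i, j})

section

variable {n : ℕ} {C : Finset (Finset (Fin n))}

theorem mem_trunk {τ σ : Finset (Fin n)} : σ ∈ trunk C τ ↔ σ ∈ C ∧ τ ⊆ σ :=
  Finset.mem_filter

theorem mem_rootRel {τ : Finset (Fin n)} {j : Fin n} :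
    j ∈ rootRel C τ ↔ ∀ σ ∈ C, τ ⊆ σ → j ∈ σ := by
  simp only [rootRel, root, Finset.mem_inf, id, mem_trunk, and_imp]

theorem subset_rootRel (τ : Finset (Fin n)) : τ ⊆ rootRel C τ :=
  fun _ hj => mem_rootRel.2 fun _ _ hτσ => hτσ hj

theorem trunk_union_eq_of_subset_rootRel {τ ρ : Finset (Fin n)} (h : ρ ⊆ rootRel C τ) :
    trunk C (τ ∪ ρ) = trunk C τ := by
  refine Finset.filter_congr fun σ hσ => ⟨fun hτρ => Finset.union_subset_left hτρ, fun hτ => ?_⟩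
  exact Finset.union_subset hτ fun j hj => mem_rootRel.1 (h hj) σ hσ hτ

theorem trunk_pair_eq_of_mem_rootRel {i j : Fin n} (h : j ∈ rootRel C {i}) :
    trunk C {i, j} = trunk C {i} :=
  trunk_union_eq_of_subset_rootRel (Finset.singleton_subset_iff.2 h)

theorem exists_of_self_mem_coverRoundTrip {i : Fin n} {c : Finset (Fin n)}
    (h : i ∈ coverRoundTrip C i c) : ∃ j ∈ c.erase i, trunk C {i, j} ≠ trunk C {i} := by
  obtain h | h := Finset.mem_union.1 h
  · exact absurd h (Finset.notMem_erase i c)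
  obtain ⟨j, hj, -⟩ := Finset.mem_sup.1 h
  obtain ⟨-, hpair, hne⟩ := Finset.mem_filter.1 hj
  have hji : j ≠ i := by
    rintro rfl
    exact hne (by rw [Finset.pair_eq_singleton])
  exact ⟨j, Finset.mem_erase.2 ⟨hji, hpair (by simp)⟩, hne⟩

end

theorem rootRel_not_in_image_of_coverRoundTrip_general (n : ℕ)
    (C : Finset (Finset (Fin n))) (i : Fin n) :
    ∀ c ∈ C, coverRoundTrip C i c ≠ rootRel C {i} := by
  intro c _ heq
  have hi : i ∈ coverRoundTrip C i c := heq ▸ subset_rootRel {i} (Finset.mem_singleton_self i)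
  obtain ⟨j, hj, hne⟩ := exists_of_self_mem_coverRoundTrip hi
  exact hne (trunk_pair_eq_of_mem_rootRel (heq ▸ Finset.mem_union_left _ hj))

/-- For a reduced code `C` and neuron `i`, the root `√[C]{i}` is not in the
image of `f_i^⊤ ∘ f_i`. -/
theorem rootRel_not_in_image_of_coverRoundTrip (n : ℕ)
    (C : Finset (Finset (Fin n))) (i : Fin n) (hC : Reduced C) :
    ∀ c ∈ C, coverRoundTrip C i c ≠ rootRel C {i} :=
  rootRel_not_in_image_of_coverRoundTrip_general n C i
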